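/- Let a(x,y), b(x,y), c(z) be smooth real-valued functions. Set A₁ = a∂_x, A₂ = b∂_y, A₃ = c∂_z. Then as differential operators on smooth functions ℝ³ → ℂ⁴: (γ¹A₁ + γ²A₂ + γ³A₃)² = -𝒜·I₄ + 𝒞·γ¹γ², where 𝒜 = a²∂_x² + b²∂_y² + c²∂_z² + (1/2)((a²)_x ∂_x + (b²)_y ∂_y + (c²)_z ∂_z) and 𝒞 = -(a_y b ∂_x - a b_x ∂_y). -/

import Mathlib

noncomputable def pauli : Fin 3 → Matrix (Fin 2) (Fin 2) ℂ :=
  ![!![0, 1; 1, 0], !![0, -Complex.I; Complex.I, 0], !![1, 0; 0, -1]]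

/-- A 4×4 matrix built from four 2×2 blocks. -/
noncomputable def blk (A B C D : Matrix (Fin 2) (Fin 2) ℂ) : Matrix (Fin 4) (Fin 4) ℂ :=
  Matrix.reindex finSumFinEquiv finSumFinEquiv (Matrix.fromBlocks A B C D)

noncomputable def γ0 : Matrix (Fin 4) (Fin 4) ℂ := blk 1 0 0 (-1)
noncomputable def γ1 : Matrix (Fin 4) (Fin 4) ℂ := blk 0 (pauli 0) (-(pauli 0)) 0
noncomputable def γ2 : Matrix (Fin 4) (Fin 4) ℂ := blk 0 (pauli 1) (-(pauli 1)) 0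
noncomputable def γ3 : Matrix (Fin 4) (Fin 4) ℂ := blk 0 (pauli 2) (-(pauli 2)) 0
noncomputable section

/-- Partial derivatives of a spinor-valued function of . -/
def px (u : ℝ × ℝ × ℝ → Fin 4 → ℂ) : ℝ × ℝ × ℝ → Fin 4 → ℂ :=
  fun p => deriv (fun s => u (s, p.2.1, p.2.2)) p.1

def py (u : ℝ × ℝ × ℝ → Fin 4 → ℂ) : ℝ × ℝ × ℝ → Fin 4 → ℂ :=
  fun p => deriv (fun s => u (p.1, s, p.2.2)) p.2.1

def pz (u : ℝ × ℝ × ℝ → Fin 4 → ℂ) : ℝ × ℝ × ℝ → Fin 4 → ℂ :=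
  fun p => deriv (fun s => u (p.1, p.2.1, s)) p.2.2

lemma lineX (x y z : ℝ) : HasDerivAt (fun s : ℝ => ((s,y,z) : ℝ×ℝ×ℝ)) ((1:ℝ),(0:ℝ),(0:ℝ)) x :=
  HasDerivAt.prodMk (hasDerivAt_id x) (hasDerivAt_const x ((y,z) : ℝ×ℝ))
lemma lineY (x y z : ℝ) : HasDerivAt (fun s : ℝ => ((x,s,z) : ℝ×ℝ×ℝ)) ((0:ℝ),(1:ℝ),(0:ℝ)) y :=
  HasDerivAt.prodMk (hasDerivAt_const y x) (HasDerivAt.prodMk (hasDerivAt_id y) (hasDerivAt_const y z))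
lemma lineZ (x y z : ℝ) : HasDerivAt (fun s : ℝ => ((x,y,s) : ℝ×ℝ×ℝ)) ((0:ℝ),(0:ℝ),(1:ℝ)) z :=
  HasDerivAt.prodMk (hasDerivAt_const z x) (HasDerivAt.prodMk (hasDerivAt_const z y) (hasDerivAt_id z))

lemma sliceX (f : ℝ×ℝ×ℝ → Fin 4 → ℂ) (hf : Differentiable ℝ f) (x y z : ℝ) :
    HasDerivAt (fun s => f (s,y,z)) (fderiv ℝ f (x,y,z) (1,0,0)) x :=
  (hf (x,y,z)).hasFDerivAt.comp_hasDerivAt x (lineX x y z)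
lemma sliceY (f : ℝ×ℝ×ℝ → Fin 4 → ℂ) (hf : Differentiable ℝ f) (x y z : ℝ) :
    HasDerivAt (fun s => f (x,s,z)) (fderiv ℝ f (x,y,z) (0,1,0)) y :=
  (hf (x,y,z)).hasFDerivAt.comp_hasDerivAt y (lineY x y z)
lemma sliceZ (f : ℝ×ℝ×ℝ → Fin 4 → ℂ) (hf : Differentiable ℝ f) (x y z : ℝ) :
    HasDerivAt (fun s => f (x,y,s)) (fderiv ℝ f (x,y,z) (0,0,1)) z :=
  (hf (x,y,z)).hasFDerivAt.comp_hasDerivAt z (lineZ x y z)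

lemma px_eq (u : ℝ×ℝ×ℝ → Fin 4 → ℂ) (hu : Differentiable ℝ u) :
    px u = fun q => fderiv ℝ u q (1,0,0) :=
  funext fun q => by obtain ⟨x,y,z⟩ := q; exact (sliceX u hu x y z).deriv
lemma py_eq (u : ℝ×ℝ×ℝ → Fin 4 → ℂ) (hu : Differentiable ℝ u) :
    py u = fun q => fderiv ℝ u q (0,1,0) :=
  funext fun q => by obtain ⟨x,y,z⟩ := q; exact (sliceY u hu x y z).deriv
lemma pz_eq (u : ℝ×ℝ×ℝ → Fin 4 → ℂ) (hu : Differentiable ℝ u) :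
    pz u = fun q => fderiv ℝ u q (0,0,1) :=
  funext fun q => by obtain ⟨x,y,z⟩ := q; exact (sliceZ u hu x y z).deriv

lemma hasDerivAt_ofReal_comp {r : ℝ → ℝ} {r' : ℝ} {x : ℝ} (h : HasDerivAt r r' x) :
    HasDerivAt (fun s => ((r s : ℝ) : ℂ)) ((r' : ℂ)) x := by
  simpa [Function.comp_def] using Complex.ofRealCLM.hasFDerivAt.comp_hasDerivAt x h

lemma HasDerivAt.mulVec (γ : Matrix (Fin 4) (Fin 4) ℂ) {f : ℝ → Fin 4 → ℂ} {f' : Fin 4 → ℂ}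
    {x : ℝ} (hf : HasDerivAt f f' x) : HasDerivAt (fun s => γ.mulVec (f s)) (γ.mulVec f') x := by
  have := (((Matrix.mulVecLin γ).restrictScalars ℝ).toContinuousLinearMap).hasFDerivAt.comp_hasDerivAt x hf
  simpa [Function.comp_def] using this

lemma blk_eq (A B C D : Matrix (Fin 2) (Fin 2) ℂ) : blk A B C D =
  !![A 0 0, A 0 1, B 0 0, B 0 1; A 1 0, A 1 1, B 1 0, B 1 1;
     C 0 0, C 0 1, D 0 0, D 0 1; C 1 0, C 1 1, D 1 0, D 1 1] := by
  ext i j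
  fin_cases i <;> fin_cases j <;>
    simp [blk, Matrix.fromBlocks, finSumFinEquiv, Fin.addCases] <;> rfl

lemma g1g1 : γ1 * γ1 = -1 := by
  rw [γ1, blk_eq]
  ext i j
  fin_cases i <;> fin_cases j <;>
    simp [pauli, Matrix.mul_apply, Fin.sum_univ_four, Matrix.one_apply, Matrix.vecHead, Matrix.vecTail]
lemma g2g2 : γ2 * γ2 = -1 := by
  rw [γ2, blk_eq]
  ext i j
  fin_cases i <;> fin_cases j <;>
    simp [pauli, Matrix.mul_apply, Fin.sum_univ_four, Matrix.one_apply, Complex.I_mul_I, Matrix.vecHead, Matrix.vecTail]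
lemma g3g3 : γ3 * γ3 = -1 := by
  rw [γ3, blk_eq]
  ext i j
  fin_cases i <;> fin_cases j <;>
    simp [pauli, Matrix.mul_apply, Fin.sum_univ_four, Matrix.one_apply, Matrix.vecHead, Matrix.vecTail]
lemma g2g1 : γ2 * γ1 = -(γ1 * γ2) := by
  rw [γ1, γ2, blk_eq, blk_eq]
  ext i j
  fin_cases i <;> fin_cases j <;>
    simp [pauli, Matrix.mul_apply, Fin.sum_univ_four, Matrix.vecHead, Matrix.vecTail]
lemma g3g1 : γ3 * γ1 = -(γ1 * γ3) := by
  rw [γ1, γ3, blk_eq, blk_eq]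
  ext i j
  fin_cases i <;> fin_cases j <;>
    simp [pauli, Matrix.mul_apply, Fin.sum_univ_four, Matrix.vecHead, Matrix.vecTail]
lemma g3g2 : γ3 * γ2 = -(γ2 * γ3) := by
  rw [γ2, γ3, blk_eq, blk_eq]
  ext i j
  fin_cases i <;> fin_cases j <;>
    simp [pauli, Matrix.mul_apply, Fin.sum_univ_four, Matrix.vecHead, Matrix.vecTail]


theorem generalized_dirac_factorization
    (a b : ℝ × ℝ → ℝ) (c : ℝ → ℝ)
    (ha : ContDiff ℝ (⊤ : ℕ∞) a) (hb : ContDiff ℝ (⊤ : ℕ∞) b) (hc : ContDiff ℝ (⊤ : ℕ∞) c)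
    -- the operators A₁ = a ∂ₓ, A₂ = b ∂_y, A₃ = c ∂_z
    (A1 : (ℝ × ℝ × ℝ → Fin 4 → ℂ) → ℝ × ℝ × ℝ → Fin 4 → ℂ)
    (A2 : (ℝ × ℝ × ℝ → Fin 4 → ℂ) → ℝ × ℝ × ℝ → Fin 4 → ℂ)
    (A3 : (ℝ × ℝ × ℝ → Fin 4 → ℂ) → ℝ × ℝ × ℝ → Fin 4 → ℂ)
    (hA1 : A1 = fun u p => ((a (p.1, p.2.1) : ℝ) : ℂ) • px u p)
    (hA2 : A2 = fun u p => ((b (p.1, p.2.1) : ℝ) : ℂ) • py u p)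
    (hA3 : A3 = fun u p => ((c p.2.2 : ℝ) : ℂ) • pz u p)
    -- the generalized Dirac spatial operator D = γ¹A₁ + γ²A₂ + γ³A₃
    (D : (ℝ × ℝ × ℝ → Fin 4 → ℂ) → ℝ × ℝ × ℝ → Fin 4 → ℂ)
    (hD : D = fun u p =>
      γ1.mulVec (A1 u p) + γ2.mulVec (A2 u p) + γ3.mulVec (A3 u p))
    (u : ℝ × ℝ × ℝ → Fin 4 → ℂ) (hu : ContDiff ℝ (⊤ : ℕ∞) u) (p : ℝ × ℝ × ℝ) :
    D (D u) p =
      -(((a (p.1, p.2.1) ^ 2 : ℝ) : ℂ) • px (px u) p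
          + ((b (p.1, p.2.1) ^ 2 : ℝ) : ℂ) • py (py u) p
          + ((c p.2.2 ^ 2 : ℝ) : ℂ) • pz (pz u) p
          + ((1 / 2 : ℝ) : ℂ) •
            (((deriv (fun s => a (s, p.2.1) ^ 2) p.1 : ℝ) : ℂ) • px u p
              + ((deriv (fun s => b (p.1, s) ^ 2) p.2.1 : ℝ) : ℂ) • py u p
              + ((deriv (fun s => c s ^ 2) p.2.2 : ℝ) : ℂ) • pz u p))
        + (γ1 * γ2).mulVec
            (-(((deriv (fun s => a (p.1, s)) p.2.1 * b (p.1, p.2.1) : ℝ) : ℂ) • px u p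
                - ((a (p.1, p.2.1) * deriv (fun s => b (s, p.2.1)) p.1 : ℝ) : ℂ) • py u p)) := by
  subst hA1 hA2 hA3 hD
  obtain ⟨x, y, z⟩ := p
  have hud : Differentiable ℝ u := hu.differentiable (by simp)
  have hu'd : Differentiable ℝ (fderiv ℝ u) := (hu.fderiv_right (m := 1) (by exact WithTop.coe_le_coe.mpr le_top)).differentiable one_ne_zero
  have hgw : ∀ w : ℝ×ℝ×ℝ, Differentiable ℝ (fun q => fderiv ℝ u q w) := fun w =>
    (ContinuousLinearMap.apply ℝ (Fin 4 → ℂ) w).differentiable.comp hu'd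
  have hgf : ∀ (w q : ℝ×ℝ×ℝ), fderiv ℝ (fun q' => fderiv ℝ u q' w) q
      = (ContinuousLinearMap.apply ℝ (Fin 4 → ℂ) w).comp (fderiv ℝ (fderiv ℝ u) q) := fun w q =>
    ((ContinuousLinearMap.apply ℝ (Fin 4 → ℂ) w).hasFDerivAt.comp q (hu'd q).hasFDerivAt).fderiv
  have hsymm : ∀ v w : ℝ×ℝ×ℝ, fderiv ℝ (fderiv ℝ u) (x,y,z) v w = fderiv ℝ (fderiv ℝ u) (x,y,z) w v :=
    fun v w => second_derivative_symmetric (f := u) (fun q => (hud q).hasFDerivAt)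
      ((hu'd (x,y,z)).hasFDerivAt) v w
  have hgx : ∀ w : ℝ×ℝ×ℝ, HasDerivAt (fun s => fderiv ℝ u (s,y,z) w)
      (fderiv ℝ (fderiv ℝ u) (x,y,z) (1,0,0) w) x := fun w => by
    have h1 := sliceX (fun q => fderiv ℝ u q w) (hgw w) x y z
    rw [hgf w] at h1
    simpa using h1
  have hgy : ∀ w : ℝ×ℝ×ℝ, HasDerivAt (fun s => fderiv ℝ u (x,s,z) w)
      (fderiv ℝ (fderiv ℝ u) (x,y,z) (0,1,0) w) y := fun w => by
    have h1 := sliceY (fun q => fderiv ℝ u q w) (hgw w) x y z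
    rw [hgf w] at h1
    simpa using h1
  have hgz : ∀ w : ℝ×ℝ×ℝ, HasDerivAt (fun s => fderiv ℝ u (x,y,s) w)
      (fderiv ℝ (fderiv ℝ u) (x,y,z) (0,0,1) w) z := fun w => by
    have h1 := sliceZ (fun q => fderiv ℝ u q w) (hgw w) x y z
    rw [hgf w] at h1
    simpa using h1
  have haX : HasDerivAt (fun s => a (s, y)) (fderiv ℝ a (x,y) (1,0)) x :=
    ((ha.differentiable (by simp)) (x,y)).hasFDerivAt.comp_hasDerivAt x
      (HasDerivAt.prodMk (hasDerivAt_id x) (hasDerivAt_const x y))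
  have haY : HasDerivAt (fun s => a (x, s)) (fderiv ℝ a (x,y) (0,1)) y :=
    ((ha.differentiable (by simp)) (x,y)).hasFDerivAt.comp_hasDerivAt y
      (HasDerivAt.prodMk (hasDerivAt_const y x) (hasDerivAt_id y))
  have hbX : HasDerivAt (fun s => b (s, y)) (fderiv ℝ b (x,y) (1,0)) x :=
    ((hb.differentiable (by simp)) (x,y)).hasFDerivAt.comp_hasDerivAt x
      (HasDerivAt.prodMk (hasDerivAt_id x) (hasDerivAt_const x y))
  have hbY : HasDerivAt (fun s => b (x, s)) (fderiv ℝ b (x,y) (0,1)) y :=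
    ((hb.differentiable (by simp)) (x,y)).hasFDerivAt.comp_hasDerivAt y
      (HasDerivAt.prodMk (hasDerivAt_const y x) (hasDerivAt_id y))
  have hcZ : HasDerivAt c (deriv c z) z := ((hc.differentiable (by simp)) z).hasDerivAt
  dsimp only
  simp only [px_eq u hud, py_eq u hud, pz_eq u hud]
  set L : ℝ×ℝ×ℝ → Fin 4 → ℂ := fun p =>
    γ1.mulVec (((a (p.1, p.2.1) : ℝ) : ℂ) • (fderiv ℝ u p) (1, 0, 0)) +
      γ2.mulVec (((b (p.1, p.2.1) : ℝ) : ℂ) • (fderiv ℝ u p) (0, 1, 0)) +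
    γ3.mulVec (((c p.2.2 : ℝ) : ℂ) • (fderiv ℝ u p) (0, 0, 1)) with hLdef
  have hD1 : HasDerivAt (fun s => L (s,y,z))
      (γ1.mulVec (((a (x,y) : ℝ) : ℂ) • fderiv ℝ (fderiv ℝ u) (x,y,z) (1,0,0) (1,0,0)
          + ((fderiv ℝ a (x,y) (1,0) : ℝ) : ℂ) • fderiv ℝ u (x,y,z) (1,0,0))
        + γ2.mulVec (((b (x,y) : ℝ) : ℂ) • fderiv ℝ (fderiv ℝ u) (x,y,z) (1,0,0) (0,1,0)
          + ((fderiv ℝ b (x,y) (1,0) : ℝ) : ℂ) • fderiv ℝ u (x,y,z) (0,1,0))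
        + γ3.mulVec (((c z : ℝ) : ℂ) • fderiv ℝ (fderiv ℝ u) (x,y,z) (1,0,0) (0,0,1)
          + (0 : ℂ) • fderiv ℝ u (x,y,z) (0,0,1))) x := by
    simp only [hLdef]
    exact ((HasDerivAt.mulVec γ1 ((hasDerivAt_ofReal_comp haX).smul (hgx (1,0,0)))).add
        (HasDerivAt.mulVec γ2 ((hasDerivAt_ofReal_comp hbX).smul (hgx (0,1,0))))).add
      (HasDerivAt.mulVec γ3 ((hasDerivAt_const x ((c z : ℝ) : ℂ)).smul (hgx (0,0,1))))
  have hD2 : HasDerivAt (fun s => L (x,s,z))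
      (γ1.mulVec (((a (x,y) : ℝ) : ℂ) • fderiv ℝ (fderiv ℝ u) (x,y,z) (0,1,0) (1,0,0)
          + ((fderiv ℝ a (x,y) (0,1) : ℝ) : ℂ) • fderiv ℝ u (x,y,z) (1,0,0))
        + γ2.mulVec (((b (x,y) : ℝ) : ℂ) • fderiv ℝ (fderiv ℝ u) (x,y,z) (0,1,0) (0,1,0)
          + ((fderiv ℝ b (x,y) (0,1) : ℝ) : ℂ) • fderiv ℝ u (x,y,z) (0,1,0))
        + γ3.mulVec (((c z : ℝ) : ℂ) • fderiv ℝ (fderiv ℝ u) (x,y,z) (0,1,0) (0,0,1)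
          + (0 : ℂ) • fderiv ℝ u (x,y,z) (0,0,1))) y := by
    simp only [hLdef]
    exact ((HasDerivAt.mulVec γ1 ((hasDerivAt_ofReal_comp haY).smul (hgy (1,0,0)))).add
        (HasDerivAt.mulVec γ2 ((hasDerivAt_ofReal_comp hbY).smul (hgy (0,1,0))))).add
      (HasDerivAt.mulVec γ3 ((hasDerivAt_const y ((c z : ℝ) : ℂ)).smul (hgy (0,0,1))))
  have hD3 : HasDerivAt (fun s => L (x,y,s))
      (γ1.mulVec (((a (x,y) : ℝ) : ℂ) • fderiv ℝ (fderiv ℝ u) (x,y,z) (0,0,1) (1,0,0)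
          + (0 : ℂ) • fderiv ℝ u (x,y,z) (1,0,0))
        + γ2.mulVec (((b (x,y) : ℝ) : ℂ) • fderiv ℝ (fderiv ℝ u) (x,y,z) (0,0,1) (0,1,0)
          + (0 : ℂ) • fderiv ℝ u (x,y,z) (0,1,0))
        + γ3.mulVec (((c z : ℝ) : ℂ) • fderiv ℝ (fderiv ℝ u) (x,y,z) (0,0,1) (0,0,1)
          + ((deriv c z : ℝ) : ℂ) • fderiv ℝ u (x,y,z) (0,0,1))) z := by
    simp only [hLdef]
    exact ((HasDerivAt.mulVec γ1 ((hasDerivAt_const z ((a (x,y) : ℝ) : ℂ)).smul (hgz (1,0,0)))).add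
        (HasDerivAt.mulVec γ2 ((hasDerivAt_const z ((b (x,y) : ℝ) : ℂ)).smul (hgz (0,1,0))))).add
      (HasDerivAt.mulVec γ3 ((hasDerivAt_ofReal_comp hcZ).smul (hgz (0,0,1))))
  have hX1 : px L (x,y,z) = _ := hD1.deriv
  have hX2 : py L (x,y,z) = _ := hD2.deriv
  have hX3 : pz L (x,y,z) = _ := hD3.deriv
  have hP1 : px (fun q => fderiv ℝ u q (1,0,0)) (x,y,z)
      = fderiv ℝ (fderiv ℝ u) (x,y,z) (1,0,0) (1,0,0) := (hgx (1,0,0)).deriv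
  have hP2 : py (fun q => fderiv ℝ u q (0,1,0)) (x,y,z)
      = fderiv ℝ (fderiv ℝ u) (x,y,z) (0,1,0) (0,1,0) := (hgy (0,1,0)).deriv
  have hP3 : pz (fun q => fderiv ℝ u q (0,0,1)) (x,y,z)
      = fderiv ℝ (fderiv ℝ u) (x,y,z) (0,0,1) (0,0,1) := (hgz (0,0,1)).deriv
  rw [hX1, hX2, hX3, hP1, hP2, hP3, (haX.fun_pow 2).deriv, (hbY.fun_pow 2).deriv, (hcZ.fun_pow 2).deriv,
    haY.deriv, hbX.deriv]
  simp only [Matrix.mulVec_add, Matrix.mulVec_smul, Matrix.mulVec_sub, Matrix.mulVec_neg,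
    Matrix.mulVec_mulVec, smul_add, smul_smul, g1g1, g2g2, g3g3, g2g1, g3g1, g3g2,
    Matrix.neg_mulVec, Matrix.one_mulVec, zero_smul, smul_zero, add_zero, smul_neg]
  simp only [hsymm (0,1,0) (1,0,0), hsymm (0,0,1) (1,0,0), hsymm (0,0,1) (0,1,0)]
  match_scalars <;> push_cast <;> ring


end
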